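/- Product symmetry at equidistant points (identity (t78) of the paper, product form): assume ħ ∉ Γ = {p + qτ : p, q ∈ ℤ}. Then for every subset I ⊆ {1,…,N}, ∏_{i∈I, j∉I} φ(x_j − x_i) = ∏_{i∈I, j∉I} φ(x_i − x_j). -/

import Mathlib

open Complex Finset

/-- The odd theta function `ϑ(z|τ)`. -/
noncomputable def ϑ (τ : ℂ) (z : ℂ) : ℂ :=
  -∑' k : ℤ, Complex.exp (Real.pi * Complex.I * τ * ((k : ℂ) + 1 / 2) ^ 2
      + 2 * Real.pi * Complex.I * (z + 1 / 2) * ((k : ℂ) + 1 / 2))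

/-- The Kronecker elliptic function `φ(z) = ϑ'(0)·ϑ(z+ħ)/(ϑ(z)·ϑ(ħ))`. -/
noncomputable def φ₁ (τ hbar z : ℂ) : ℂ :=
  deriv (ϑ τ) 0 * ϑ τ (z + hbar) / (ϑ τ z * ϑ τ hbar)

/-- Membership in the period lattice `Γ = ℤ ⊕ ℤτ`. -/
def inLattice (τ w : ℂ) : Prop := ∃ p q : ℤ, w = (p : ℂ) + (q : ℂ) * τ

/-!
Since `ϑ (z + 1) = -ϑ z`, the function `φ` is `1`-periodic, so the factor `φ (x_j - x_i)` only
depends on `j - i` modulo `N`, and `{1, …, N}` is a system of residues. The claim thus becomes: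
for a subset `A` of a finite abelian group `G`, the multiset of differences `b - a` with
`a ∈ A`, `b ∉ A` is invariant under negation. For each `d` there are exactly `#A` pairs
`(a, b) ∈ A × G` with `b - a = d`, and the number of those with `b ∈ A` is symmetric in `d`
by swapping `a` and `b`; hence so is the number of those with `b ∉ A`.
-/

namespace Finset

variable {ι κ M : Type*} [CommMonoid M] [DecidableEq κ]

lemma prod_comp_eq_of_card_fiber_eq {S : Finset ι} {g₁ g₂ : ι → κ}
    (h : ∀ d, #{p ∈ S | g₁ p = d} = #{p ∈ S | g₂ p = d}) (f : κ → M) :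
    ∏ p ∈ S, f (g₁ p) = ∏ p ∈ S, f (g₂ p) := by
  have hmap : S.val.map g₁ = S.val.map g₂ := Multiset.ext.2 fun d => by
    simp only [Multiset.count_map, eq_comm (a := d)]
    exact h d
  have := congrArg (fun m => (m.map f).prod) hmap
  simpa only [Multiset.map_map, Function.comp_def, prod_map_val] using this

section Differences

variable {G : Type*} [AddCommGroup G] [DecidableEq G]

lemma card_filter_prod_self_sub_neg (s : Finset G) (d : G) :
    #{p ∈ s ×ˢ s | p.2 - p.1 = -d} = #{p ∈ s ×ˢ s | p.2 - p.1 = d} := by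
  refine card_bij (fun p _ => p.swap) ?_ (fun p _ q _ h => Prod.swap_injective h) ?_
  · intro p hp
    simp only [mem_filter, mem_product] at hp ⊢
    exact ⟨hp.1.symm, by rw [Prod.snd_swap, Prod.fst_swap, ← neg_sub, hp.2, neg_neg]⟩
  · intro q hq
    simp only [mem_filter, mem_product] at hq
    exact ⟨q.swap, by simp [hq.1, ← hq.2], Prod.swap_swap q⟩

variable [Fintype G]

lemma card_filter_prod_univ_sub (s : Finset G) (d : G) :
    #{p ∈ s ×ˢ univ | p.2 - p.1 = d} = #s := by
  refine (card_bij (fun a _ => (a, a + d)) ?_ (fun a _ b _ h => congrArg Prod.fst h) ?_).symm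
  · intro a ha
    simp [ha]
  · intro p hp
    simp only [mem_filter, mem_product] at hp
    exact ⟨p.1, hp.1.1, by ext <;> simp [← hp.2]⟩

lemma card_filter_prod_compl_sub_neg (s : Finset G) (d : G) :
    #{p ∈ s ×ˢ sᶜ | p.2 - p.1 = -d} = #{p ∈ s ×ˢ sᶜ | p.2 - p.1 = d} := by
  have hsplit : ∀ e : G,
      #{p ∈ s ×ˢ s | p.2 - p.1 = e} + #{p ∈ s ×ˢ sᶜ | p.2 - p.1 = e} = #s := by
    intro e
    rw [← card_union_of_disjoint, ← filter_union, ← product_union, union_compl,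
      card_filter_prod_univ_sub]
    exact disjoint_filter_filter (disjoint_product.2 (Or.inr disjoint_compl_right))
  have hd := hsplit d
  have hnegd := hsplit (-d)
  rw [card_filter_prod_self_sub_neg] at hnegd
  omega

theorem prod_prod_compl_sub_comm (f : G → M) (s : Finset G) :
    ∏ a ∈ s, ∏ b ∈ sᶜ, f (b - a) = ∏ a ∈ s, ∏ b ∈ sᶜ, f (a - b) := by
  rw [← prod_product' (f := fun a b => f (b - a)), ← prod_product' (f := fun a b => f (a - b))]
  refine prod_comp_eq_of_card_fiber_eq (fun d => ?_) f
  rw [← card_filter_prod_compl_sub_neg]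
  refine congrArg card (filter_congr fun p _ => ?_)
  exact ⟨fun h => by rw [← neg_sub, h, neg_neg], fun h => by rw [← h, neg_sub]⟩

end Differences

end Finset

namespace ZMod

variable {N : ℕ} [NeZero N]

lemma image_natCast_Icc : (Icc 1 N).image (Nat.cast : ℕ → ZMod N) = univ := by
  refine eq_univ_of_forall fun x => mem_image.2 ⟨N - (-x).val, ?_, ?_⟩
  · have := (-x).val_lt
    have := NeZero.pos N
    rw [mem_Icc]
    omega
  · rw [Nat.cast_sub (-x).val_lt.le, natCast_self, natCast_zmod_val, zero_sub, neg_neg]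

lemma injOn_natCast_Icc : Set.InjOn (Nat.cast : ℕ → ZMod N) (Icc 1 N) :=
  card_image_iff.1 <| by rw [image_natCast_Icc, card_univ, card, Nat.card_Icc]; omega

lemma prod_Icc_sdiff_natCast_sub_comm {M : Type*} [CommMonoid M] (g : ZMod N → M)
    {I : Finset ℕ} (hI : I ⊆ Icc 1 N) :
    ∏ i ∈ I, ∏ j ∈ Icc 1 N \ I, g (j - i) = ∏ i ∈ I, ∏ j ∈ Icc 1 N \ I, g (i - j) := by
  have hcompl : (Icc 1 N \ I).image (Nat.cast : ℕ → ZMod N) = (I.image Nat.cast)ᶜ := by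
    rw [image_sdiff_of_injOn injOn_natCast_Icc hI, image_natCast_Icc,
      compl_eq_univ_sdiff]
  simpa only [← hcompl, prod_image (injOn_natCast_Icc.mono hI),
    prod_image (injOn_natCast_Icc.mono sdiff_subset)]
    using prod_prod_compl_sub_comm g (I.image Nat.cast)

end ZMod

lemma Function.Periodic.apply_intCast_div_eq_emod {α : Type*} {F : ℂ → α}
    (hF : Function.Periodic F 1) (N : ℕ) (m : ℤ) : F (m / N) = F ((m % N : ℤ) / N) := by
  rcases eq_or_ne N 0 with rfl | hN
  · simp
  have hsplit : (m : ℂ) / N = ((m % N : ℤ) : ℂ) / N + (m / N : ℤ) * 1 := by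
    conv_lhs => rw [← Int.emod_add_mul_ediv m N]
    push_cast
    field_simp
  rw [hsplit, hF.int_mul]

open scoped Real in
lemma ϑ_add_one (τ z : ℂ) : ϑ τ (z + 1) = -ϑ τ z := by
  have hterm (k : ℤ) :
      exp (π * I * τ * ((k : ℂ) + 1 / 2) ^ 2 + 2 * π * I * (z + 1 + 1 / 2) * ((k : ℂ) + 1 / 2)) =
        -exp (π * I * τ * ((k : ℂ) + 1 / 2) ^ 2 + 2 * π * I * (z + 1 / 2) * ((k : ℂ) + 1 / 2)) := by
    rw [← mul_neg_one, ← exp_pi_mul_I, ← exp_add, exp_eq_exp_iff_exists_int]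
    exact ⟨k, by ring⟩
  rw [ϑ, ϑ, tsum_congr hterm, tsum_neg]

lemma φ₁_periodic (τ hbar : ℂ) : Function.Periodic (φ₁ τ hbar) 1 := by
  intro z
  rw [φ₁, φ₁, add_right_comm, ϑ_add_one, ϑ_add_one, mul_neg, neg_mul, neg_div_neg_eq]

theorem product_symmetry_general (τ : ℂ) (hbar : ℂ) (N : ℕ) (hN : 0 < N)
    (I : Finset ℕ) (hI : I ⊆ Finset.Icc 1 N) :
    ∏ i ∈ I, ∏ j ∈ Finset.Icc 1 N \ I, φ₁ τ hbar ((j : ℂ) / N - (i : ℂ) / N)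
    = ∏ i ∈ I, ∏ j ∈ Finset.Icc 1 N \ I, φ₁ τ hbar ((i : ℂ) / N - (j : ℂ) / N) := by
  have : NeZero N := ⟨hN.ne'⟩
  set g : ZMod N → ℂ := fun d => φ₁ τ hbar ((ZMod.cast d : ℤ) / N)
  have hfactor : ∀ i j : ℕ, φ₁ τ hbar ((j : ℂ) / N - (i : ℂ) / N) = g (j - i) := by
    intro i j
    have hdiff : (j : ℂ) / N - i / N = ((j - i : ℤ) : ℂ) / N := by push_cast; ring
    rw [hdiff, (φ₁_periodic τ hbar).apply_intCast_div_eq_emod, ← ZMod.coe_intCast]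
    push_cast
    rfl
  simp_rw [hfactor]
  exact ZMod.prod_Icc_sdiff_natCast_sub_comm g hI

/-- Identity (t78) of the paper: product symmetry at equidistant points. -/
theorem product_symmetry (τ : ℂ) (hτ : 0 < τ.im) (hbar : ℂ)
    (hbarΓ : ¬ inLattice τ hbar) (N : ℕ) (hN : 0 < N)
    (I : Finset ℕ) (hI : I ⊆ Finset.Icc 1 N) :
    ∏ i ∈ I, ∏ j ∈ Finset.Icc 1 N \ I, φ₁ τ hbar ((j : ℂ) / N - (i : ℂ) / N)
    = ∏ i ∈ I, ∏ j ∈ Finset.Icc 1 N \ I, φ₁ τ hbar ((i : ℂ) / N - (j : ℂ) / N) :=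
  product_symmetry_general τ hbar N hN I hI
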